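/- arXiv:1312.0036 — 3 statements merged into one kernel-verified Lean document; each statement's English description precedes it below -/
import Mathlib

section
/- Let n = 2^d. The number of inputs X ∈ {0,1}ⁿ such that T_d(X) = Par(X) is exactly 2^{n−1} + 1 if d is even, and exactly 2^{n−1} − 1 if d is odd. -/
/-- The parity (XOR) of the bits of `X ∈ {0,1}ⁿ`: `true` iff the Hamming weight is odd. -/
def parity {n : ℕ} (X : Fin n → Bool) : Bool :=
  decide ((Finset.univ.filter (fun i => X i = true)).card % 2 = 1)

/-- The complete binary AND/OR tree `T_d : {0,1}^{2^d} → {0,1}`: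
`T_0(x) = x`; for `d > 0`, the root is an AND gate if `d` is odd and an OR gate
if `d` is even, applied to the two half-trees `T_{d-1}`. -/
def andOrTree : (d : ℕ) → (Fin (2 ^ d) → Bool) → Bool
  | 0, X => X ⟨0, by norm_num⟩
  | d + 1, X =>
    let L := andOrTree d (fun i =>
      X (Fin.castLE (Nat.pow_le_pow_right (by norm_num) (Nat.le_succ d)) i))
    let R := andOrTree d (fun i =>
      X ⟨2 ^ d + i.val, by have := i.isLt; rw [pow_succ]; omega⟩)
    if (d + 1) % 2 = 1 then L && R else L || R

/-! Encode bits as signs `±1`. Then `2·#{X | T_d X = Par X} = 2ⁿ + c_d` with the correlation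
`c_d = ∑_X (-1)^{T_d X} (-1)^{Par X}`. Since `(-1)^{Par}` is multiplicative over the two halves and
has zero sum, expanding `(-1)^{a ∧ b} = (1 + (-1)^a + (-1)^b - (-1)^{a+b})/2` (and dually for `∨`)
gives `c_{d+1} = ∓ c_d² / 2`, so `c_d = 2·(-1)^d` starting from `c_0 = 2`. -/

open Finset

def boolSign (b : Bool) : ℤ := if b then -1 else 1

lemma two_mul_boolSign_and (a b : Bool) :
    2 * boolSign (a && b) = 1 + boolSign a + boolSign b - boolSign a * boolSign b := by
  cases a <;> cases b <;> rfl

lemma two_mul_boolSign_or (a b : Bool) :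
    2 * boolSign (a || b) = -1 + boolSign a + boolSign b + boolSign a * boolSign b := by
  cases a <;> cases b <;> rfl

lemma two_mul_card_filter_eq {α : Type*} [Fintype α] (f g : α → Bool) :
    2 * (#{x | f x = g x} : ℤ) = Fintype.card α + ∑ x, boolSign (f x) * boolSign (g x) := by
  have hsign : ∀ x, boolSign (f x) * boolSign (g x) = 2 * (if f x = g x then 1 else 0) - 1 := by
    intro x; cases f x <;> cases g x <;> rfl
  simp only [hsign, sum_sub_distrib, ← mul_sum, sum_boole, sum_const, card_univ,
    nsmul_eq_mul, mul_one]
  ring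

lemma boolSign_parity {n : ℕ} (X : Fin n → Bool) : boolSign (parity X) = ∏ i, boolSign (X i) := by
  simp only [boolSign, prod_ite, prod_const_one, mul_one, prod_const, parity, decide_eq_true_eq]
  split_ifs with h
  · exact (Odd.neg_one_pow (Nat.odd_iff.mpr h)).symm
  · exact (Even.neg_one_pow (Nat.even_iff.mpr (by omega))).symm

lemma sum_boolSign_parity {n : ℕ} (hn : 0 < n) : ∑ X : Fin n → Bool, boolSign (parity X) = 0 := by
  simp only [boolSign_parity, ← Fintype.prod_sum]
  exact prod_eq_zero (mem_univ ⟨0, hn⟩) rfl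

def halvesIndexEquiv (d : ℕ) : Fin (2 ^ (d + 1)) ≃ Fin (2 ^ d) ⊕ Fin (2 ^ d) :=
  (finCongr (by rw [pow_succ, mul_two])).trans finSumFinEquiv.symm

/-- Its two components are definitionally the inputs of the two subtrees in `andOrTree`. -/
def halvesEquiv (d : ℕ) (α : Type*) :
    (Fin (2 ^ (d + 1)) → α) ≃ (Fin (2 ^ d) → α) × (Fin (2 ^ d) → α) :=
  ((halvesIndexEquiv d).arrowCongr (.refl α)).trans (Equiv.sumArrowEquivProdArrow _ _ _)

lemma sum_halvesEquiv {d : ℕ} {α M : Type*} [Fintype α] [AddCommMonoid M]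
    (F : (Fin (2 ^ d) → α) → (Fin (2 ^ d) → α) → M) :
    ∑ X, F (halvesEquiv d α X).1 (halvesEquiv d α X).2 = ∑ L, ∑ R, F L R := by
  rw [(halvesEquiv d α).sum_comp (fun p => F p.1 p.2), Fintype.sum_prod_type]

lemma boolSign_parity_halves {d : ℕ} (X : Fin (2 ^ (d + 1)) → Bool) :
    boolSign (parity X) =
      boolSign (parity (halvesEquiv d Bool X).1) * boolSign (parity (halvesEquiv d Bool X).2) := by
  simp only [boolSign_parity]
  rw [← (halvesIndexEquiv d).symm.prod_comp, Fintype.prod_sum_type]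
  rfl

lemma andOrTree_succ (d : ℕ) (X : Fin (2 ^ (d + 1)) → Bool) :
    andOrTree (d + 1) X =
      let L := andOrTree d (halvesEquiv d Bool X).1
      let R := andOrTree d (halvesEquiv d Bool X).2
      if (d + 1) % 2 = 1 then L && R else L || R :=
  rfl

section Gates

variable {α : Type*} [Fintype α] (f : α → Bool) {u : α → ℤ}

lemma two_mul_sum_boolSign_and_mul (hu : ∑ x, u x = 0) :
    2 * ∑ x, ∑ y, boolSign (f x && f y) * (u x * u y) = -(∑ x, boolSign (f x) * u x) ^ 2 :=
  calc 2 * ∑ x, ∑ y, boolSign (f x && f y) * (u x * u y)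
      = ∑ x, ∑ y, (u x * u y + boolSign (f x) * u x * u y + u x * (boolSign (f y) * u y)
          - boolSign (f x) * u x * (boolSign (f y) * u y)) := by
        rw [mul_sum]; refine sum_congr rfl fun x _ => ?_
        rw [mul_sum]; refine sum_congr rfl fun y _ => ?_
        rw [← mul_assoc, two_mul_boolSign_and]; ring
    _ = (∑ x, u x) * (∑ x, u x) + (∑ x, boolSign (f x) * u x) * (∑ x, u x)
          + (∑ x, u x) * (∑ x, boolSign (f x) * u x)
          - (∑ x, boolSign (f x) * u x) * (∑ x, boolSign (f x) * u x) := by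
        simp only [Fintype.sum_mul_sum, ← sum_add_distrib, ← sum_sub_distrib]
    _ = -(∑ x, boolSign (f x) * u x) ^ 2 := by rw [hu]; ring

lemma two_mul_sum_boolSign_or_mul (hu : ∑ x, u x = 0) :
    2 * ∑ x, ∑ y, boolSign (f x || f y) * (u x * u y) = (∑ x, boolSign (f x) * u x) ^ 2 :=
  calc 2 * ∑ x, ∑ y, boolSign (f x || f y) * (u x * u y)
      = ∑ x, ∑ y, (boolSign (f x) * u x * (boolSign (f y) * u y) + boolSign (f x) * u x * u y
          + u x * (boolSign (f y) * u y) - u x * u y) := by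
        rw [mul_sum]; refine sum_congr rfl fun x _ => ?_
        rw [mul_sum]; refine sum_congr rfl fun y _ => ?_
        rw [← mul_assoc, two_mul_boolSign_or]; ring
    _ = (∑ x, boolSign (f x) * u x) * (∑ x, boolSign (f x) * u x)
          + (∑ x, boolSign (f x) * u x) * (∑ x, u x) + (∑ x, u x) * (∑ x, boolSign (f x) * u x)
          - (∑ x, u x) * (∑ x, u x) := by
        simp only [Fintype.sum_mul_sum, ← sum_add_distrib, ← sum_sub_distrib]
    _ = (∑ x, boolSign (f x) * u x) ^ 2 := by rw [hu]; ring

end Gates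

def andOrCorrelation (d : ℕ) : ℤ :=
  ∑ X : Fin (2 ^ d) → Bool, boolSign (andOrTree d X) * boolSign (parity X)

lemma two_mul_andOrCorrelation_succ (d : ℕ) :
    2 * andOrCorrelation (d + 1) =
      if (d + 1) % 2 = 1 then -andOrCorrelation d ^ 2 else andOrCorrelation d ^ 2 := by
  have hsplit : andOrCorrelation (d + 1) = ∑ L, ∑ R,
      boolSign (if (d + 1) % 2 = 1 then andOrTree d L && andOrTree d R
        else andOrTree d L || andOrTree d R) * (boolSign (parity L) * boolSign (parity R)) := by
    rw [← sum_halvesEquiv]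
    simp only [andOrCorrelation, andOrTree_succ, boolSign_parity_halves]
  have hbias := sum_boolSign_parity (Nat.two_pow_pos d)
  rw [hsplit]
  split_ifs
  · exact two_mul_sum_boolSign_and_mul _ hbias
  · exact two_mul_sum_boolSign_or_mul _ hbias

lemma andOrCorrelation_eq (d : ℕ) : andOrCorrelation d = if Even d then 2 else -2 := by
  induction d with
  | zero => decide
  | succ d ih =>
    have h := two_mul_andOrCorrelation_succ d
    have hsq : andOrCorrelation d ^ 2 = 4 := by rw [ih]; split_ifs <;> norm_num
    rw [hsq] at h
    split_ifs at h ⊢ <;> simp only [Nat.even_iff] at * <;> omega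

/-- Let `n = 2^d`. The number of inputs `X ∈ {0,1}ⁿ` with `T_d(X) = Par(X)` is exactly
`2^(n-1) + 1` if `d` is even, and exactly `2^(n-1) - 1` if `d` is odd. -/
theorem andOrTree_agrees_parity_count (d : ℕ) :
    (Finset.univ.filter
        (fun X : Fin (2 ^ d) → Bool => andOrTree d X = parity X)).card
      = if Even d then 2 ^ (2 ^ d - 1) + 1 else 2 ^ (2 ^ d - 1) - 1 := by
  have hcount := two_mul_card_filter_eq (andOrTree d) parity
  have hhalf : 2 ^ 2 ^ d = 2 ^ (2 ^ d - 1) * 2 := by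
    rw [← pow_succ, Nat.sub_add_cancel Nat.one_le_two_pow]
  rw [Fintype.card_fun, Fintype.card_bool, Fintype.card_fin, hhalf, ← andOrCorrelation,
    andOrCorrelation_eq] at hcount
  have hpos : 1 ≤ 2 ^ (2 ^ d - 1) := Nat.one_le_two_pow
  generalize 2 ^ (2 ^ d - 1) = N at hcount hpos ⊢
  split_ifs at hcount ⊢ <;> push_cast at hcount <;> omega
end

section
/- (Simon) Let n ≥ 2 and let f : {0,1}ⁿ → {0,1} be a Boolean function depending on all n of its input variables, i.e., for every i ∈ [n] there exists X ∈ {0,1}ⁿ with f(X^{{i}}) ≠ f(X). Then s(f) ≥ (1/2)·log₂ n − (1/2)·log₂ log₂ n + 1/2. -/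
/-!
For a relevant variable `i`, let `A` be the set of inputs at which `f` is sensitive to `i`.
An input `x ∈ A` can leave `A` along a direction `j ≠ i` only if `j` is sensitive at `x` or at
`x` flipped in `i`, so inside the cube `A` has minimum degree at least `n + 2 - 2 s(f)`; a
nonempty subset of the cube with minimum degree `d` has at least `2 ^ d` points, hence
`|A| ≥ 2 ^ (n + 2) / 4 ^ s(f)`. Summing over the `n` variables and double counting the pairs
`(x, i)` with `i` sensitive at `x` gives `4 n ≤ s(f) 4 ^ s(f)`, and taking logarithms finishes.
-/

/-- `X` with its `i`-th bit flipped. -/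
def flipBit {n : ℕ} (X : Fin n → Bool) (i : Fin n) : Fin n → Bool :=
  Function.update X i (!X i)

/-- The sensitivity `s(f)`: the maximum over inputs `X` of the number of coordinates `i`
such that flipping the `i`-th bit of `X` changes the value of `f`. -/
def sens {n : ℕ} (f : (Fin n → Bool) → Bool) : ℕ :=
  Finset.univ.sup (fun X : Fin n → Bool =>
    (Finset.univ.filter (fun i : Fin n => f (flipBit X i) ≠ f X)).card)

open Finset Real

section Hypercube

variable {n : ℕ}

@[simp]
lemma flipBit_apply_self (x : Fin n → Bool) (i : Fin n) : flipBit x i i = !x i := by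
  simp [flipBit]

lemma flipBit_apply_of_ne (x : Fin n → Bool) {i j : Fin n} (h : j ≠ i) : flipBit x i j = x j :=
  Function.update_of_ne h _ _

@[simp]
lemma flipBit_flipBit (x : Fin n → Bool) (i : Fin n) : flipBit (flipBit x i) i = x := by
  simp [flipBit]

lemma flipBit_comm (x : Fin n → Bool) (i j : Fin n) :
    flipBit (flipBit x i) j = flipBit (flipBit x j) i := by
  rcases eq_or_ne i j with rfl | h
  · rfl
  · simp only [flipBit, Function.update_of_ne h, Function.update_of_ne h.symm]
    exact Function.update_comm h _ _ _

lemma le_card_flipBit_mem_filter_of_succ_le {B : Finset (Fin n → Bool)} {d : ℕ} {j : Fin n}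
    {y : Fin n → Bool} (hdeg : d + 1 ≤ #{i | flipBit y i ∈ B}) :
    d ≤ #{i | flipBit y i ∈ B.filter (· j = y j)} := by
  have hsub : ({i | flipBit y i ∈ B} : Finset (Fin n)) ⊆
      insert j ({i | flipBit y i ∈ B.filter (· j = y j)} : Finset (Fin n)) := by
    intro i hi
    rcases eq_or_ne i j with rfl | hij
    · exact mem_insert_self _ _
    · simp only [mem_insert, mem_filter, mem_univ, true_and] at hi ⊢
      exact Or.inr ⟨hi, flipBit_apply_of_ne _ hij.symm⟩
  have := (card_le_card hsub).trans (card_insert_le _ _)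
  omega

theorem two_pow_le_card_of_le_degree {d : ℕ} {B : Finset (Fin n → Bool)} (hB : B.Nonempty)
    (hdeg : ∀ x ∈ B, d ≤ #{i | flipBit x i ∈ B}) : 2 ^ d ≤ #B := by
  induction d generalizing B with
  | zero => simpa using hB.card_pos
  | succ d ih =>
    obtain ⟨x, hx⟩ := hB
    obtain ⟨j, hj⟩ : ∃ j, flipBit x j ∈ B := by
      simpa [Finset.Nonempty] using card_pos.mp (d.succ_pos.trans_le (hdeg x hx))
    have slice : ∀ y ∈ B, 2 ^ d ≤ #(B.filter (· j = y j)) := fun y hy =>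
      ih ⟨y, mem_filter.mpr ⟨hy, rfl⟩⟩ fun z hz => by
        obtain ⟨hzB, hzj⟩ := mem_filter.mp hz
        simpa only [← hzj] using le_card_flipBit_mem_filter_of_succ_le (hdeg z hzB)
    have hsplit : #(B.filter (· j = x j)) + #(B.filter (· j = flipBit x j j)) = #B := by
      simpa [← Bool.eq_not] using card_filter_add_card_filter_not (s := B) (· j = x j)
    have := slice x hx
    have := slice _ hj
    rw [pow_succ]
    omega

end Hypercube

section Sensitivity

variable {n : ℕ} (f : (Fin n → Bool) → Bool)

def sensitiveCoords (x : Fin n → Bool) : Finset (Fin n) := {i | f (flipBit x i) ≠ f x}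

def pivotalInputs (i : Fin n) : Finset (Fin n → Bool) := {x | f (flipBit x i) ≠ f x}

variable {f}

lemma mem_sensitiveCoords {x : Fin n → Bool} {i : Fin n} :
    i ∈ sensitiveCoords f x ↔ f (flipBit x i) ≠ f x := by
  simp [sensitiveCoords]

lemma mem_pivotalInputs {x : Fin n → Bool} {i : Fin n} :
    x ∈ pivotalInputs f i ↔ f (flipBit x i) ≠ f x := by
  simp [pivotalInputs]

lemma card_sensitiveCoords_le_sens (x : Fin n → Bool) : #(sensitiveCoords f x) ≤ sens f :=
  le_sup (f := fun x => #(sensitiveCoords f x)) (mem_univ x)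

variable (f) in
lemma sum_card_pivotalInputs_le : ∑ i, #(pivotalInputs f i) ≤ 2 ^ n * sens f :=
  calc ∑ i, #(pivotalInputs f i) = ∑ x, #(sensitiveCoords f x) :=
        sum_card_bipartiteAbove_eq_sum_card_bipartiteBelow _
    _ ≤ ∑ _x : Fin n → Bool, sens f := sum_le_sum fun x _ => card_sensitiveCoords_le_sens x
    _ = 2 ^ n * sens f := by simp

lemma mem_sensitiveCoords_flipBit {x : Fin n → Bool} {i : Fin n} (hx : x ∈ pivotalInputs f i) :
    i ∈ sensitiveCoords f (flipBit x i) := by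
  rw [mem_pivotalInputs] at hx
  rw [mem_sensitiveCoords, flipBit_flipBit]
  exact hx.symm

lemma flipBit_mem_pivotalInputs {x : Fin n → Bool} {i j : Fin n} (hx : x ∈ pivotalInputs f i)
    (hjx : j ∉ sensitiveCoords f x) (hjxi : j ∉ sensitiveCoords f (flipBit x i)) :
    flipBit x j ∈ pivotalInputs f i := by
  rw [mem_sensitiveCoords, not_not] at hjx hjxi
  rw [mem_pivotalInputs] at hx ⊢
  rwa [← flipBit_comm, hjxi, hjx]

lemma le_card_flipBit_mem_pivotalInputs {x : Fin n → Bool} {i : Fin n}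
    (hx : x ∈ pivotalInputs f i) :
    n + 2 ≤ #{j | flipBit x j ∈ pivotalInputs f i} + 2 * sens f := by
  have hexits : ({j | flipBit x j ∉ pivotalInputs f i} : Finset (Fin n)) ⊆
      (sensitiveCoords f x).erase i ∪ (sensitiveCoords f (flipBit x i)).erase i := by
    intro j hj
    rw [mem_filter] at hj
    have hji : j ≠ i := by
      rintro rfl
      exact hj.2 (by simpa [mem_pivotalInputs, eq_comm] using hx)
    by_contra hcon
    simp only [mem_union, mem_erase, hji, ne_eq, not_false_eq_true, true_and, not_or] at hcon
    exact hj.2 (flipBit_mem_pivotalInputs hx hcon.1 hcon.2)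
  have hsplit := card_filter_add_card_filter_not (s := univ) (flipBit x · ∈ pivotalInputs f i)
  have hunion := (card_le_card hexits).trans (card_union_le _ _)
  rw [card_erase_of_mem (mem_sensitiveCoords.mpr (mem_pivotalInputs.mp hx)),
    card_erase_of_mem (mem_sensitiveCoords_flipBit hx)] at hunion
  have := card_sensitiveCoords_le_sens (f := f) x
  have := card_sensitiveCoords_le_sens (f := f) (flipBit x i)
  have := card_pos.mpr ⟨i, mem_sensitiveCoords.mpr (mem_pivotalInputs.mp hx)⟩
  simp only [card_univ, Fintype.card_fin] at hsplit
  omega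

theorem two_pow_le_four_pow_sens_mul_card_pivotalInputs {i : Fin n}
    (hi : (pivotalInputs f i).Nonempty) :
    2 ^ (n + 2) ≤ 4 ^ sens f * #(pivotalInputs f i) := by
  have hcard : 2 ^ (n + 2 - 2 * sens f) ≤ #(pivotalInputs f i) :=
    two_pow_le_card_of_le_degree hi fun x hx => by
      have := le_card_flipBit_mem_pivotalInputs hx
      omega
  calc 2 ^ (n + 2) ≤ 2 ^ (2 * sens f + (n + 2 - 2 * sens f)) :=
        pow_le_pow_right₀ one_le_two (by omega)
    _ = 4 ^ sens f * 2 ^ (n + 2 - 2 * sens f) := by rw [pow_add, pow_mul]; norm_num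
    _ ≤ 4 ^ sens f * #(pivotalInputs f i) := Nat.mul_le_mul_left _ hcard

theorem four_mul_le_sens_mul_four_pow_sens (hf : ∀ i, (pivotalInputs f i).Nonempty) :
    4 * n ≤ sens f * 4 ^ sens f := by
  have hsum : n * 2 ^ (n + 2) ≤ 4 ^ sens f * ∑ i, #(pivotalInputs f i) :=
    calc n * 2 ^ (n + 2) = ∑ _i : Fin n, 2 ^ (n + 2) := by simp
      _ ≤ ∑ i, 4 ^ sens f * #(pivotalInputs f i) :=
        sum_le_sum fun i _ => two_pow_le_four_pow_sens_mul_card_pivotalInputs (hf i)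
      _ = 4 ^ sens f * ∑ i, #(pivotalInputs f i) := (mul_sum _ _ _).symm
  have := hsum.trans (Nat.mul_le_mul_left _ (sum_card_pivotalInputs_le f))
  refine Nat.le_of_mul_le_mul_left ?_ (Nat.two_pow_pos n)
  calc 2 ^ n * (4 * n) = n * 2 ^ (n + 2) := by ring
    _ ≤ 4 ^ sens f * (2 ^ n * sens f) := this
    _ = 2 ^ n * (sens f * 4 ^ sens f) := by ring

end Sensitivity

lemma logb_sub_logb_logb_le_of_four_mul_le {n : ℝ} {s : ℕ} (hn : 2 ≤ n)
    (h : 4 * n ≤ s * 4 ^ s) :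
    1 / 2 * logb 2 n - 1 / 2 * logb 2 (logb 2 n) + 1 / 2 ≤ s := by
  set L := logb 2 n
  have hL : 1 ≤ L := by
    simpa using logb_le_logb_of_le one_lt_two two_pos hn
  have hs : (0 : ℝ) < s := by
    rcases Nat.eq_zero_or_pos s with rfl | hs
    · norm_num at h
      linarith
    · exact_mod_cast hs
  have hlog : 2 + L ≤ logb 2 s + 2 * s := by
    have := logb_le_logb_of_le one_lt_two (by positivity) h
    rwa [logb_mul (by norm_num) (by positivity), logb_mul hs.ne' (by positivity),
      show (4 : ℝ) = 2 ^ (2 : ℕ) by norm_num, ← pow_mul, logb_pow, logb_pow,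
      logb_self_eq_one one_lt_two, mul_one, Nat.cast_mul, Nat.cast_two, mul_one] at this
  rcases le_or_gt (s : ℝ) (2 * L) with hsL | hsL
  · have := logb_le_logb_of_le one_lt_two hs hsL
    rw [logb_mul two_ne_zero (by positivity), logb_self_eq_one one_lt_two] at this
    linarith
  · have := logb_nonneg one_lt_two hL
    linarith

/-- Simon: if `f : {0,1}ⁿ → {0,1}` depends on all `n` of its variables, then
`s(f) ≥ (1/2)·log₂ n − (1/2)·log₂ log₂ n + 1/2`. -/
theorem simon_sensitivity (n : ℕ) (hn : 2 ≤ n) (f : (Fin n → Bool) → Bool)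
    (hdep : ∀ i : Fin n, ∃ X : Fin n → Bool, f (flipBit X i) ≠ f X) :
    ((sens f : ℝ)) ≥
      (1 / 2) * Real.logb 2 n - (1 / 2) * Real.logb 2 (Real.logb 2 n) + 1 / 2 := by
  have hpivotal : ∀ i, (pivotalInputs f i).Nonempty := fun i =>
    (hdep i).imp fun _ hX => mem_pivotalInputs.mpr hX
  have hcomb : 4 * n ≤ sens f * 4 ^ sens f := four_mul_le_sens_mul_four_pow_sens hpivotal
  exact logb_sub_logb_logb_le_of_four_mul_le (by exact_mod_cast hn) (by exact_mod_cast hcomb)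
end

section
/- (Beals–Buhrman–Cleve–Mosca–de Wolf) For every Boolean function f : {0,1}ⁿ → {0,1}, deg(f) ≤ bs(f)³. -/
/-- A real polynomial in `n` variables is multilinear if it has degree at most 1 in
each variable. -/
def Multilinear {n : ℕ} (p : MvPolynomial (Fin n) ℝ) : Prop :=
  ∀ i : Fin n, p.degreeOf i ≤ 1

/-- `p` represents the Boolean function `f` on `{0,1}ⁿ`. -/
def Represents {n : ℕ} (p : MvPolynomial (Fin n) ℝ) (f : (Fin n → Bool) → Bool) : Prop :=
  ∀ X : Fin n → Bool,
    MvPolynomial.eval (fun i => if X i then (1 : ℝ) else 0) p = if f X then 1 else 0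

/-- `X` with all the bits in the block `B` flipped. -/
def flipBlock {n : ℕ} (X : Fin n → Bool) (B : Finset (Fin n)) : Fin n → Bool :=
  fun i => if i ∈ B then !X i else X i

/-- The block sensitivity `bs(f)`: the maximum over inputs `X` of the maximum number `k` of
pairwise disjoint blocks `B₁,…,B_k ⊆ [n]` with `f(X^{B_j}) ≠ f(X)` for all `j`. -/
noncomputable def blockSens {n : ℕ} (f : (Fin n → Bool) → Bool) : ℕ :=
  Finset.univ.sup (fun X : Fin n → Bool =>
    sSup {k : ℕ | ∃ B : Fin k → Finset (Fin n),
      (∀ j j' : Fin k, j ≠ j' → Disjoint (B j) (B j')) ∧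
      ∀ j : Fin k, f (flipBlock X (B j)) ≠ f X})

/-!
At every input, a maximal disjoint family of minimal sensitive blocks has at most `bs(f)`
members, each of size at most `bs(f)` (every bit of a minimal sensitive block `B` is sensitive at
`X^B`), and its union is a certificate. So every input has a certificate of size `bs(f)²`.

Now query a certificate of a `1`-input `Y` of the current subcube. For a `0`-input `X` of the
refined subcube, the bits of the certificate where `X` and `Y` differ form a sensitive block
of `X` that avoids every block disjoint from the queried bits: the number of disjoint
`0 → 1` sensitive blocks outside the fixed bits drops by one with each round. After `bs(f)`
rounds `f` is constant, which gives a polynomial of degree `bs(f) · bs(f)²` that agrees with `f`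
on the cube. Its multilinear reduction has no larger degree and equals `p`, because a
multilinear polynomial vanishing on `{0,1}ⁿ` is zero.
-/

open Finset

section Cube

variable {σ R : Type*}

def cubePoint [Zero R] [One R] (X : σ → Bool) : σ → R := fun i => if X i then 1 else 0

lemma isIdempotentElem_cubePoint [MulZeroOneClass R] (X : σ → Bool) (i : σ) :
    IsIdempotentElem (cubePoint X i : R) := by
  unfold cubePoint
  split_ifs
  exacts [.one, .zero]

lemma filter_eq_filter_iff_eqOn [DecidableEq σ] {T : Finset σ} {X Y : σ → Bool} :
    {i ∈ T | X i} = {i ∈ T | Y i} ↔ Set.EqOn X Y T := by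
  simp only [Finset.ext_iff, mem_filter, Set.EqOn, mem_coe]
  refine ⟨fun h i hi => Bool.eq_iff_iff.mpr ?_, fun h i => ?_⟩
  · simpa [hi] using h i
  · by_cases hi : i ∈ T
    · simp [hi, h hi]
    · simp [hi]

end Cube

namespace MvPolynomial

variable {σ R : Type*}

section CommSemiring

variable [CommSemiring R]

lemma totalDegree_X_le_one (i : σ) : (X i : MvPolynomial σ R).totalDegree ≤ 1 :=
  (totalDegree_monomial_le _ _).trans (by simp)

noncomputable def multilinearize (q : MvPolynomial σ R) : MvPolynomial σ R :=
  ∑ m ∈ q.support, monomial (m.mapRange (fun e => min e 1) (by simp)) (q.coeff m)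

lemma eval_multilinearize {x : σ → R} (hx : ∀ i, IsIdempotentElem (x i))
    (q : MvPolynomial σ R) :
    eval x (multilinearize q) = eval x q := by
  conv_rhs => rw [q.as_sum]
  simp only [multilinearize, map_sum, eval_monomial]
  refine sum_congr rfl fun m _ => congrArg _ ?_
  rw [Finsupp.prod_mapRange_index (fun i => pow_zero _)]
  refine Finsupp.prod_congr fun i hi => ?_
  have hmi : m i ≠ 0 := Finsupp.mem_support_iff.mp hi
  rw [(hx i).pow_eq (by simpa using hmi), (hx i).pow_eq hmi]

lemma totalDegree_multilinearize_le (q : MvPolynomial σ R) :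
    (multilinearize q).totalDegree ≤ q.totalDegree := by
  refine (totalDegree_finsetSum _ _).trans <| Finset.sup_le fun m hm => ?_
  refine (totalDegree_monomial_le _ _).trans <| le_trans ?_ (le_totalDegree hm)
  rw [Finsupp.sum_mapRange_index (fun _ => rfl)]
  exact sum_le_sum fun i _ => min_le_left _ _

lemma degreeOf_multilinearize_le_one (q : MvPolynomial σ R) (i : σ) :
    (multilinearize q).degreeOf i ≤ 1 := by
  refine (degreeOf_sum_le _ _ _).trans <| Finset.sup_le fun m _ => ?_
  refine degreeOf_le_iff.mpr fun d hd => ?_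
  rw [mem_singleton.mp (support_monomial_subset hd)]
  exact min_le_right _ _

end CommSemiring

section CommRing

variable [CommRing R]

noncomputable def cubeIndicator (T : Finset σ) (Y : σ → Bool) : MvPolynomial σ R :=
  ∏ i ∈ T, if Y i then X i else 1 - X i

lemma totalDegree_cubeIndicator_le (T : Finset σ) (Y : σ → Bool) :
    (cubeIndicator T Y : MvPolynomial σ R).totalDegree ≤ #T := by
  refine (totalDegree_finsetProd _ _).trans ?_
  refine (sum_le_card_nsmul T _ 1 fun i _ => ?_).trans (by simp)
  split_ifs
  · exact totalDegree_X_le_one i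
  · exact (totalDegree_sub _ _).trans (by simpa using totalDegree_X_le_one i)

lemma eval_cubePoint_cubeIndicator (T : Finset σ) (X Y : σ → Bool) :
    eval (cubePoint X) (cubeIndicator T Y : MvPolynomial σ R) =
      if ∀ i ∈ T, X i = Y i then 1 else 0 := by
  rw [cubeIndicator, map_prod, ← prod_boole]
  refine prod_congr rfl fun i _ => ?_
  cases hX : X i <;> cases Y i <;> simp [cubePoint, hX]

/-- The glued polynomial is `∑ cubeIndicator T Y * q Y` over representatives `Y` of the
subcubes obtained by fixing the bits in `T`. -/
theorem exists_totalDegree_le_card_add_of_forall_eqOn [Fintype σ]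
    {P : (σ → Bool) → Prop} {g : (σ → Bool) → R} (T : Finset σ) (d : ℕ)
    (h : ∀ X₀, P X₀ → ∃ q : MvPolynomial σ R, q.totalDegree ≤ d ∧
      ∀ X, P X → Set.EqOn X X₀ T → eval (cubePoint X) q = g X) :
    ∃ q : MvPolynomial σ R, q.totalDegree ≤ #T + d ∧
      ∀ X, P X → eval (cubePoint X) q = g X := by
  classical
  choose! q hq_deg hq_eval using h
  -- `rep X` depends on `X` only through its restriction to `T`.
  let rep : (σ → Bool) → σ → Bool := fun X =>
    Classical.epsilon fun X₀ => P X₀ ∧ {i ∈ T | X₀ i} = {i ∈ T | X i}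
  have hrep : ∀ X, P X → P (rep X) ∧ Set.EqOn (rep X) X T := fun X hX =>
    (Classical.epsilon_spec (p := fun X₀ => P X₀ ∧ {i ∈ T | X₀ i} = {i ∈ T | X i})
      ⟨X, hX, rfl⟩).imp_right filter_eq_filter_iff_eqOn.mp
  refine ⟨∑ Y ∈ (univ.filter P).image rep, cubeIndicator T Y * q Y, ?_, fun X hX => ?_⟩
  · refine (totalDegree_finsetSum _ _).trans (Finset.sup_le fun Y hY => ?_)
    obtain ⟨X, hX, rfl⟩ := mem_image.mp hY
    exact (totalDegree_mul _ _).trans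
      (add_le_add (totalDegree_cubeIndicator_le T _) (hq_deg _ (hrep X (mem_filter.mp hX).2).1))
  · have hX_mem : rep X ∈ (univ.filter P).image rep := mem_image_of_mem rep (by simpa using hX)
    rw [map_sum, sum_eq_single_of_mem (rep X) hX_mem]
    · have hX_rep : ∀ i ∈ T, X i = rep X i := fun i hi => ((hrep X hX).2 hi).symm
      rw [map_mul, eval_cubePoint_cubeIndicator, if_pos hX_rep, one_mul]
      exact hq_eval _ (hrep X hX).1 X hX (hrep X hX).2.symm
    · intro Y hY hYX
      obtain ⟨Z, hZ, rfl⟩ := mem_image.mp hY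
      rw [map_mul, eval_cubePoint_cubeIndicator, if_neg, zero_mul]
      refine fun hXZ => hYX ?_
      have : {i ∈ T | X i} = {i ∈ T | Z i} := filter_eq_filter_iff_eqOn.mpr
        fun i hi => (hXZ i hi).trans ((hrep Z (mem_filter.mp hZ).2).2 hi)
      simp only [rep, this]

end CommRing

end MvPolynomial

open MvPolynomial

lemma Multilinear.eq_of_eval_cubePoint_eq {n : ℕ} {p q : MvPolynomial (Fin n) ℝ}
    (hp : Multilinear p) (hq : Multilinear q)
    (h : ∀ X : Fin n → Bool, eval (cubePoint X) p = eval (cubePoint X) q) : p = q := by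
  rw [← sub_eq_zero]
  refine eq_zero_of_eval_zero_at_prod_finset _ (fun _ => {0, 1}) (fun i => ?_) fun x hx => ?_
  · have := degreeOf_sub_le i p q
    have := hp i
    have := hq i
    rw [card_pair zero_ne_one]
    omega
  · have hx : cubePoint (fun i => decide (x i = 1)) = x := by
      funext i
      rcases mem_insert.mp (hx i) with h0 | h1
      · simp [cubePoint, h0]
      · simp [cubePoint, mem_singleton.mp h1]
    rw [← hx, map_sub, h, sub_self]

section BlockSensitivity

variable {n : ℕ}

def IsSensitiveBlock (f : (Fin n → Bool) → Bool) (X : Fin n → Bool) (B : Finset (Fin n)) :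
    Prop :=
  f (flipBlock X B) ≠ f X

def IsSensitiveFamily (f : (Fin n → Bool) → Bool) (X : Fin n → Bool)
    (F : Finset (Finset (Fin n))) : Prop :=
  (F : Set (Finset (Fin n))).PairwiseDisjoint id ∧ ∀ B ∈ F, IsSensitiveBlock f X B

def IsCertificate (f : (Fin n → Bool) → Bool) (Y : Fin n → Bool) (S : Finset (Fin n)) :
    Prop :=
  ∀ Z, Set.EqOn Z Y S → f Z = f Y

variable {f : (Fin n → Bool) → Bool} {X Y : Fin n → Bool} {B S : Finset (Fin n)}
  {F : Finset (Finset (Fin n))}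

@[simp]
lemma flipBlock_empty (X : Fin n → Bool) : flipBlock X ∅ = X := by
  funext i
  simp [flipBlock]

lemma flipBlock_flipBlock_singleton {i : Fin n} (hi : i ∈ B) :
    flipBlock (flipBlock X B) {i} = flipBlock X (B.erase i) := by
  funext j
  by_cases hj : j = i
  · simp [flipBlock, hj, hi]
  · simp [flipBlock, hj]

lemma flipBlock_filter_ne_eqOn (X Y : Fin n → Bool) (S : Finset (Fin n)) :
    Set.EqOn (flipBlock X {i ∈ S | X i ≠ Y i}) Y S := by
  intro i hi
  simp only [flipBlock, mem_filter, mem_coe.mp hi, true_and]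
  cases X i <;> cases Y i <;> simp

lemma disjoint_filter_ne_of_eqOn {D : Finset (Fin n)} (h : Set.EqOn X Y D) :
    Disjoint {i ∈ S | X i ≠ Y i} D :=
  disjoint_left.mpr fun _ hi hiD => (mem_filter.mp hi).2 (h hiD)

lemma not_isSensitiveBlock_empty : ¬ IsSensitiveBlock f X ∅ := by
  simp [IsSensitiveBlock]

lemma IsCertificate.isSensitiveBlock_filter_ne (hS : IsCertificate f Y S) (hXY : f X ≠ f Y) :
    IsSensitiveBlock f X {i ∈ S | X i ≠ Y i} := by
  rw [IsSensitiveBlock, hS _ (flipBlock_filter_ne_eqOn X Y S)]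
  exact hXY.symm

lemma isCertificate_univ (f : (Fin n → Bool) → Bool) (Y : Fin n → Bool) :
    IsCertificate f Y univ := by
  intro Z h
  rw [coe_univ, Set.eqOn_univ] at h
  rw [h]

lemma IsSensitiveBlock.notMem_of_forall_disjoint (hB : IsSensitiveBlock f X B)
    (hBF : ∀ B' ∈ F, Disjoint B B') : B ∉ F := fun hBmem => by
  rw [disjoint_self.mp (hBF B hBmem)] at hB
  exact not_isSensitiveBlock_empty hB

lemma IsSensitiveFamily.insert (hF : IsSensitiveFamily f X F) (hB : IsSensitiveBlock f X B)
    (hBF : ∀ B' ∈ F, Disjoint B B') : IsSensitiveFamily f X (insert B F) := by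
  refine ⟨?_, fun B' hB' => ?_⟩
  · rw [coe_insert]
    exact hF.1.insert fun B' hB' _ => hBF B' hB'
  · rcases mem_insert.mp hB' with rfl | hB'
    exacts [hB, hF.2 B' hB']

lemma isSensitiveFamily_empty : IsSensitiveFamily f X ∅ := by
  simp [IsSensitiveFamily]

lemma IsSensitiveFamily.card_le_blockSens (hF : IsSensitiveFamily f X F) :
    #F ≤ blockSens f := by
  classical
  unfold blockSens
  refine le_trans ?_ (le_sup (mem_univ X))
  refine le_csSup ⟨Fintype.card (Finset (Fin n)), fun k ⟨B, hdisj, hsens⟩ => ?_⟩ ?_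
  · have hinj : Function.Injective B := fun j j' h => by
      by_contra hne
      have hd := hdisj j j' hne
      rw [h, disjoint_self] at hd
      exact hsens j' (by rw [hd, bot_eq_empty, flipBlock_empty])
    simpa using Fintype.card_le_of_injective B hinj
  · refine ⟨fun j => F.equivFin.symm j, fun j j' hne => ?_, fun j => hF.2 _ (coe_mem _)⟩
    exact hF.1 (coe_mem _) (coe_mem _) fun h => hne (F.equivFin.symm.injective (Subtype.ext h))

lemma card_le_blockSens_of_minimal (hB : Minimal (IsSensitiveBlock f X) B) :
    #B ≤ blockSens f := by
  classical
  have hF : IsSensitiveFamily f (flipBlock X B) (B.image singleton) := by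
    refine ⟨fun _ hi _ hj hne => ?_, fun _ hiB => ?_⟩
    · obtain ⟨i, -, rfl⟩ := mem_image.mp hi
      obtain ⟨j, -, rfl⟩ := mem_image.mp hj
      exact disjoint_singleton.mpr fun h => hne (h ▸ rfl)
    · obtain ⟨i, hi, rfl⟩ := mem_image.mp hiB
      have herase : f (flipBlock X (B.erase i)) = f X := not_not.mp fun h =>
        notMem_erase i B (by rwa [hB.eq_of_le h (erase_subset i B)])
      rw [IsSensitiveBlock, flipBlock_flipBlock_singleton hi, herase]
      exact Ne.symm hB.prop
  simpa [card_image_of_injective _ singleton_injective] using hF.card_le_blockSens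

lemma isCertificate_biUnion_of_maximal (hF : Maximal
    (fun F => IsSensitiveFamily f Y F ∧ ∀ B ∈ F, Minimal (IsSensitiveBlock f Y) B) F) :
    IsCertificate f Y (F.biUnion id) := by
  intro Z hZ
  by_contra hZY
  obtain ⟨B, hB_le, hB⟩ := exists_minimal_le_of_wellFoundedLT (IsSensitiveBlock f Y) _
    ((isCertificate_univ f Z).isSensitiveBlock_filter_ne (Ne.symm hZY))
  have hBF : ∀ B' ∈ F, Disjoint B B' := fun B' hB' => disjoint_left.mpr fun i hi hi' =>
    (mem_filter.mp (hB_le hi)).2 (hZ (mem_biUnion.mpr ⟨B', hB', hi'⟩)).symm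
  have hF_insert : insert B F ⊆ F := hF.2
    ⟨hF.prop.1.insert hB.prop hBF, (forall_mem_insert _ _ _).mpr ⟨hB, hF.prop.2⟩⟩
    (subset_insert B F)
  exact hB.prop.notMem_of_forall_disjoint hBF (hF_insert (mem_insert_self B F))

lemma card_biUnion_le_blockSens_sq (hF : IsSensitiveFamily f Y F)
    (hF_min : ∀ B ∈ F, Minimal (IsSensitiveBlock f Y) B) :
    #(F.biUnion id) ≤ blockSens f ^ 2 :=
  calc #(F.biUnion id) ≤ ∑ B ∈ F, #B := card_biUnion_le
    _ ≤ #F * blockSens f :=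
      sum_le_card_nsmul _ _ _ fun B hB => card_le_blockSens_of_minimal (hF_min B hB)
    _ ≤ blockSens f ^ 2 := by
      rw [sq]
      exact Nat.mul_le_mul_right _ hF.card_le_blockSens

theorem exists_isCertificate_card_le_blockSens_sq (f : (Fin n → Bool) → Bool)
    (Y : Fin n → Bool) : ∃ S, IsCertificate f Y S ∧ #S ≤ blockSens f ^ 2 := by
  obtain ⟨F, hF⟩ := exists_maximal_of_wellFoundedGT
    (fun F => IsSensitiveFamily f Y F ∧ ∀ B ∈ F, Minimal (IsSensitiveBlock f Y) B)
    ⟨∅, isSensitiveFamily_empty, by simp⟩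
  exact ⟨_, isCertificate_biUnion_of_maximal hF, card_biUnion_le_blockSens_sq hF.prop.1 hF.prop.2⟩

end BlockSensitivity

section Construction

variable {n m : ℕ} {f : (Fin n → Bool) → Bool} {D S : Finset (Fin n)} {v X₀ Y : Fin n → Bool}

/-- On the subcube of inputs that agree with `v` on `D`, every `0`-input has at most `m`
disjoint sensitive blocks outside `D`. -/
def ZeroBlockSensLE (f : (Fin n → Bool) → Bool) (D : Finset (Fin n)) (v : Fin n → Bool)
    (m : ℕ) : Prop :=
  ∀ X, Set.EqOn X v D → f X = false → ∀ F, IsSensitiveFamily f X F →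
    (∀ B ∈ F, Disjoint B D) → #F ≤ m

lemma ZeroBlockSensLE.apply_eq_of_zero (h : ZeroBlockSensLE f D v 0) {X : Fin n → Bool}
    (hX : Set.EqOn X v D) : f X = f v := by
  have key : ∀ X Y, Set.EqOn X v D → Set.EqOn Y v D → f X = false → f Y = true → False := by
    intro X Y hX hY hXf hYt
    have hB := (isCertificate_univ f Y).isSensitiveBlock_filter_ne (X := X)
      (by rw [hXf, hYt]; decide)
    have := h X hX hXf _ (isSensitiveFamily_empty.insert hB (by simp))
      (by simpa using disjoint_filter_ne_of_eqOn (hX.trans hY.symm))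
    simp at this
  cases hXf : f X <;> cases hvf : f v
  exacts [rfl, (key X v hX (Set.eqOn_refl v D) hXf hvf).elim,
    (key v X (Set.eqOn_refl v D) hX hvf hXf).elim, rfl]

/-- The bits of `S` where a `0`-input `X` differs from `Y` form one more sensitive block of `X`,
disjoint from all blocks that avoid `D ∪ S`. -/
lemma ZeroBlockSensLE.union_of_isCertificate (h : ZeroBlockSensLE f D v (m + 1))
    (hS : IsCertificate f Y S) (hYv : Set.EqOn Y v D) (hYt : f Y = true)
    (hX₀ : Set.EqOn X₀ v D) : ZeroBlockSensLE f (D ∪ S) X₀ m := by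
  intro X hX hXf F hF hFDS
  have hXD : Set.EqOn X v D := fun i hi => (hX (mem_union_left S hi)).trans (hX₀ hi)
  have hB := hS.isSensitiveBlock_filter_ne (X := X) (by rw [hXf, hYt]; decide)
  have hBF : ∀ B' ∈ F, Disjoint {i ∈ S | X i ≠ Y i} B' := fun B' hB' =>
    ((hFDS B' hB').mono_right subset_union_right).symm.mono_left (filter_subset _ _)
  have := h X hXD hXf _ (hF.insert hB hBF) <| (forall_mem_insert _ _ _).mpr
    ⟨disjoint_filter_ne_of_eqOn (hXD.trans hYv.symm),
      fun B' hB' => (hFDS B' hB').mono_right subset_union_left⟩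
  rw [card_insert_of_notMem (hB.notMem_of_forall_disjoint hBF)] at this
  omega

theorem ZeroBlockSensLE.exists_totalDegree_le_mul {c : ℕ}
    (hcert : ∀ Y, f Y = true → ∃ S, IsCertificate f Y S ∧ #S ≤ c)
    (h : ZeroBlockSensLE f D v m) :
    ∃ q : MvPolynomial (Fin n) ℝ, q.totalDegree ≤ m * c ∧
      ∀ X, Set.EqOn X v D → eval (cubePoint X) q = if f X then 1 else 0 := by
  induction m generalizing D v with
  | zero =>
    refine ⟨C (if f v then 1 else 0), by rw [zero_mul, totalDegree_C], fun X hX => ?_⟩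
    rw [eval_C, h.apply_eq_of_zero hX]
  | succ m ih =>
    by_cases hY : ∃ Y, Set.EqOn Y v D ∧ f Y = true
    swap
    · push Not at hY
      exact ⟨0, by simp, fun X hX => by simp [hY X hX]⟩
    obtain ⟨Y, hYv, hYt⟩ := hY
    obtain ⟨S, hS, hSc⟩ := hcert Y hYt
    obtain ⟨q, hq_deg, hq⟩ := exists_totalDegree_le_card_add_of_forall_eqOn S (m * c)
      (P := fun X => Set.EqOn X v D) fun X₀ hX₀ => by
        obtain ⟨q, hq_deg, hq⟩ := ih (h.union_of_isCertificate hS hYv hYt hX₀)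
        refine ⟨q, hq_deg, fun X hX hXS => hq X ?_⟩
        rw [coe_union]
        exact (hX.trans hX₀.symm).union hXS
    exact ⟨q, hq_deg.trans (by rw [add_mul, one_mul, add_comm]; gcongr), hq⟩

end Construction

/-- Beals–Buhrman–Cleve–Mosca–de Wolf: `deg(f) ≤ bs(f)³`. -/
theorem bbcmw_degree_le_blockSens_cubed (n : ℕ) (f : (Fin n → Bool) → Bool)
    (p : MvPolynomial (Fin n) ℝ) (hml : Multilinear p) (hrep : Represents p f) :
    p.totalDegree ≤ blockSens f ^ 3 := by
  have hbs : ZeroBlockSensLE f ∅ (fun _ => false) (blockSens f) :=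
    fun _ _ _ _ hF _ => hF.card_le_blockSens
  obtain ⟨q, hq_deg, hq⟩ :=
    hbs.exists_totalDegree_le_mul fun Y _ => exists_isCertificate_card_le_blockSens_sq f Y
  have hp : p = multilinearize q :=
    hml.eq_of_eval_cubePoint_eq (degreeOf_multilinearize_le_one q) fun X => by
      rw [eval_multilinearize (isIdempotentElem_cubePoint X), hq X (by simp)]
      exact hrep X
  calc p.totalDegree = (multilinearize q).totalDegree := by rw [hp]
    _ ≤ q.totalDegree := totalDegree_multilinearize_le q
    _ ≤ blockSens f * blockSens f ^ 2 := hq_deg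
    _ = blockSens f ^ 3 := by ring
end
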